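/- arXiv:1604.04052 — 2 statements merged into one kernel-verified Lean document; each statement's English description precedes it below -/
import Mathlib

section
/- Let A be invertible and A = (1/(N+1)²)·tridiag(-1,2,-1), N even, b⁽¹⁾ = (𝟏ᵀ,𝟏ᵀ)ᵀ, b⁽²⁾ = (-𝟏ᵀ,𝟏ᵀ)ᵀ. Then the residual-minimizing solution of A x = b⁽²⁾ over the affine space 0 + K_N(A; b⁽¹⁾) is x = 0, i.e. the minimizer of ‖b⁽²⁾ - A x‖₂ over x ∈ K_N(A; b⁽¹⁾) is the zero vector. -/
/-!
Reversing the index order, `i ↦ N - 1 - i`, fixes the tridiagonal matrix `A` and the vector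
`b⁽¹⁾`, so every vector of the Krylov space `K_N(A; b⁽¹⁾)`, and its image under `A`, is symmetric
under reversal. Since `N = 2n`, the vector `b⁽²⁾` is antisymmetric, hence orthogonal to `A x` for
all `x` in the Krylov space, and Pythagoras gives `‖b⁽²⁾ - A x‖² = ‖b⁽²⁾‖² + ‖A x‖²`, which
exceeds `‖b⁽²⁾‖²` unless `A x = 0`, i.e. unless `x = 0`.
-/

open Matrix

section Reversal

variable {ι R : Type*}

def fixedVectors (R : Type*) [Semiring R] (σ : Equiv.Perm ι) : Submodule R (ι → R) where
  carrier := {v | v ∘ σ = v}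
  add_mem' {u v} hu hv := by
    simp only [Set.mem_ofPred_eq] at hu hv ⊢
    rw [Pi.add_comp, hu, hv]
  zero_mem' := rfl
  smul_mem' c v hv := by
    simp only [Set.mem_ofPred_eq] at hv ⊢
    rw [Pi.smul_comp, hv]

@[simp]
theorem mem_fixedVectors [Semiring R] {σ : Equiv.Perm ι} {v : ι → R} :
    v ∈ fixedVectors R σ ↔ v ∘ σ = v :=
  Iff.rfl

variable [Fintype ι]

theorem Matrix.mulVec_comp_of_submatrix_eq [NonUnitalNonAssocSemiring R] {A : Matrix ι ι R}
    {σ : Equiv.Perm ι} (hA : A.submatrix σ σ = A) (v : ι → R) :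
    A *ᵥ (v ∘ σ) = (A *ᵥ v) ∘ σ := by
  conv_lhs => rw [← hA]
  rw [submatrix_mulVec_equiv, Function.comp_assoc, Equiv.self_comp_symm, Function.comp_id]

theorem Matrix.mulVec_mem_fixedVectors [Semiring R] {A : Matrix ι ι R} {σ : Equiv.Perm ι}
    (hA : A.submatrix σ σ = A) {v : ι → R} (hv : v ∈ fixedVectors R σ) :
    A *ᵥ v ∈ fixedVectors R σ := by
  rw [mem_fixedVectors] at hv ⊢
  rw [← mulVec_comp_of_submatrix_eq hA, hv]

theorem Matrix.span_pow_mulVec_le_fixedVectors [Semiring R] [DecidableEq ι]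
    {A : Matrix ι ι R} {σ : Equiv.Perm ι} (hA : A.submatrix σ σ = A) {b : ι → R}
    (hb : b ∈ fixedVectors R σ) :
    Submodule.span R (Set.range fun k : ℕ => (A ^ k) *ᵥ b) ≤ fixedVectors R σ := by
  rw [Submodule.span_le]
  rintro _ ⟨k, rfl⟩
  induction k with
  | zero => simpa using hb
  | succ k ih => simpa [pow_succ', ← mulVec_mulVec] using mulVec_mem_fixedVectors hA ih

theorem Matrix.dotProduct_eq_zero_of_comp_eq_neg [Ring R] [IsAddTorsionFree R]
    {σ : Equiv.Perm ι} {u v : ι → R} (hu : u ∘ σ = -u) (hv : v ∘ σ = v) :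
    u ⬝ᵥ v = 0 := by
  have h := comp_equiv_dotProduct_comp_equiv u v σ
  rwa [hu, hv, neg_dotProduct, neg_eq_self] at h

end Reversal

section Residual

variable {ι : Type*} [Fintype ι]

theorem Matrix.sub_dotProduct_sub_of_dotProduct_eq_zero {R : Type*} [CommRing R]
    {u w : ι → R} (h : u ⬝ᵥ w = 0) : (u - w) ⬝ᵥ (u - w) = u ⬝ᵥ u + w ⬝ᵥ w := by
  rw [sub_dotProduct, dotProduct_sub, dotProduct_sub, h, dotProduct_comm w u, h]
  ring

theorem Matrix.sqrt_dotProduct_self_le_of_dotProduct_eq_zero {u w : ι → ℝ}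
    (h : u ⬝ᵥ w = 0) : √(u ⬝ᵥ u) ≤ √((u - w) ⬝ᵥ (u - w)) := by
  rw [sub_dotProduct_sub_of_dotProduct_eq_zero h]
  gcongr
  simpa using dotProduct_star_self_nonneg w

theorem Matrix.sqrt_dotProduct_self_lt_of_dotProduct_eq_zero {u w : ι → ℝ} (h : u ⬝ᵥ w = 0)
    (hw : w ≠ 0) : √(u ⬝ᵥ u) < √((u - w) ⬝ᵥ (u - w)) := by
  rw [sub_dotProduct_sub_of_dotProduct_eq_zero h]
  have hu : 0 ≤ u ⬝ᵥ u := by simpa using dotProduct_star_self_nonneg u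
  have hw_pos : 0 < w ⬝ᵥ w := by simpa using dotProduct_star_self_pos_iff.mpr hw
  gcongr
  linarith

end Residual

section Tridiagonal

variable (R : Type*)

def symmTridiagonal [Zero R] (N : ℕ) (d e : R) : Matrix (Fin N) (Fin N) R :=
  of fun i j => if i = j then d else if (i : ℕ) + 1 = j ∨ (j : ℕ) + 1 = i then e else 0

def halfSign [One R] [Neg R] (n : ℕ) : Fin (2 * n) → R :=
  fun i => if (i : ℕ) < n then -1 else 1

variable {R}

theorem symmTridiagonal_submatrix_revPerm [Zero R] (N : ℕ) (d e : R) :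
    (symmTridiagonal R N d e).submatrix Fin.revPerm Fin.revPerm = symmTridiagonal R N d e := by
  ext i j
  have h_adj : ((i.rev : ℕ) + 1 = j.rev ∨ (j.rev : ℕ) + 1 = i.rev) ↔
      ((i : ℕ) + 1 = j ∨ (j : ℕ) + 1 = i) := by
    simp only [Fin.val_rev]
    omega
  simp only [symmTridiagonal, submatrix_apply, of_apply, Fin.revPerm_apply, Fin.rev_inj, h_adj]

theorem halfSign_comp_revPerm [InvolutiveNeg R] [One R] (n : ℕ) :
    halfSign R n ∘ Fin.revPerm = -halfSign R n := by
  ext i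
  have hi := i.isLt
  simp only [halfSign, Function.comp_apply, Fin.revPerm_apply, Fin.val_rev, Pi.neg_apply]
  split_ifs <;> first | omega | simp

end Tridiagonal

/-- for invertible `A = 1/(N+1)²·tridiag(-1,2,-1)`, `N = 2n`,
`b⁽¹⁾ = (𝟏ᵀ,𝟏ᵀ)ᵀ`, `b⁽²⁾ = (-𝟏ᵀ,𝟏ᵀ)ᵀ`, the residual-minimizing solution of
`A x = b⁽²⁾` over `0 + K_N(A;b⁽¹⁾)` is `x = 0`: zero lies in the Krylov space,
it minimizes `‖b⁽²⁾ - Ax‖₂`, and any other element of the space has strictly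
larger residual norm. -/
theorem recycling_useless_example (n : ℕ) :
    let N := 2 * n
    let A : Matrix (Fin N) (Fin N) ℝ :=
      (1 / ((N : ℝ) + 1) ^ 2) •
        Matrix.of (fun i j : Fin N =>
          if i = j then (2 : ℝ)
          else if (i : ℕ) + 1 = (j : ℕ) ∨ (j : ℕ) + 1 = (i : ℕ) then -1 else 0)
    let b₁ : Fin N → ℝ := fun _ => 1
    let b₂ : Fin N → ℝ := fun i => if (i : ℕ) < n then -1 else 1
    let K₁ : Submodule ℝ (Fin N → ℝ) :=
      Submodule.span ℝ (Set.range fun j : Fin N => ((A ^ (j : ℕ)).mulVec b₁))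
    IsUnit A →
      (0 : Fin N → ℝ) ∈ K₁ ∧
      (∀ x ∈ K₁, Real.sqrt (b₂ ⬝ᵥ b₂) ≤
        Real.sqrt ((b₂ - A.mulVec x) ⬝ᵥ (b₂ - A.mulVec x))) ∧
      (∀ x ∈ K₁, x ≠ 0 → Real.sqrt (b₂ ⬝ᵥ b₂) <
        Real.sqrt ((b₂ - A.mulVec x) ⬝ᵥ (b₂ - A.mulVec x))) := by
  intro N A b₁ b₂ K₁ hA
  have hA_rev : A.submatrix Fin.revPerm Fin.revPerm = A := by
    change ((1 / ((N : ℝ) + 1) ^ 2) • symmTridiagonal ℝ N 2 (-1)).submatrix _ _ = _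
    rw [submatrix_smul, Pi.smul_apply, Pi.smul_apply, symmTridiagonal_submatrix_revPerm]
    rfl
  have hK₁ : K₁ ≤ fixedVectors ℝ Fin.revPerm := by
    refine (Submodule.span_mono ?_).trans (span_pow_mulVec_le_fixedVectors hA_rev (b := b₁) rfl)
    rintro _ ⟨j, rfl⟩
    exact ⟨j, rfl⟩
  have h_orth : ∀ x ∈ K₁, b₂ ⬝ᵥ A *ᵥ x = 0 := fun x hx =>
    dotProduct_eq_zero_of_comp_eq_neg (halfSign_comp_revPerm n)
      (mulVec_mem_fixedVectors hA_rev (hK₁ hx))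
  refine ⟨K₁.zero_mem, fun x hx => sqrt_dotProduct_self_le_of_dotProduct_eq_zero (h_orth x hx),
    fun x hx hx0 => sqrt_dotProduct_self_lt_of_dotProduct_eq_zero (h_orth x hx) ?_⟩
  rw [← mulVec_zero A]
  exact (mulVec_injective_iff_isUnit.mpr hA).ne hx0
end

section
/- Let T ∈ C^{m×m} with m = kJ, and define R ∈ C^{m×m} column-wise by R e_{1+iJ+j} = T^j e_{1+iJ} for j = 0,…,J-1, i = 0,…,k-1. If T is an unreduced Hermitian tridiagonal matrix (all subdiagonal entries β_{i+1} nonzero), then R is upper triangular and invertible; its diagonal entries are products of the β's and hence nonzero. -/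
open Matrix

/-!
If `T` vanishes below its subdiagonal, then `Tⁿ` vanishes below its `n`-th subdiagonal, and
its entry at `(b + n, b)` is the product of the subdiagonal entries `T (b + t + 1) (b + t)`,
`t < n`, because the only path of length `n` from `b` down to `b + n` steps down by one each time.
Column `c = iJ + j` of `R` is `Tʲ e_{iJ}`, so its lowest nonzero entry sits exactly on the
diagonal: `R` is upper triangular with nonzero diagonal, hence invertible.
-/

namespace Matrix

theorem isUnit_of_isUpperTriangular {m K : Type*} [Fintype m] [DecidableEq m] [LinearOrder m]
    [Field K] {M : Matrix m m K} (hM : M.IsUpperTriangular) (hdiag : ∀ i, M i i ≠ 0) :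
    IsUnit M := by
  rw [isUnit_iff_isUnit_det, det_of_isUpperTriangular hM, isUnit_iff_ne_zero]
  exact Finset.prod_ne_zero_iff.mpr fun i _ => hdiag i

section Hessenberg

variable {R : Type*} [Semiring R] {n : ℕ} {T : Matrix (Fin n) (Fin n) R}

theorem pow_apply_eq_zero_of_add_lt (hT : ∀ i j : Fin n, (j : ℕ) + 1 < i → T i j = 0) :
    ∀ (d : ℕ) (a b : Fin n), (b : ℕ) + d < a → (T ^ d) a b = 0
  | 0, a, b, h => one_apply_ne (Fin.ne_of_val_ne (by omega))
  | d + 1, a, b, h => by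
    rw [pow_succ, mul_apply]
    refine Finset.sum_eq_zero fun c _ => ?_
    by_cases hc : (c : ℕ) + d < a
    · rw [pow_apply_eq_zero_of_add_lt hT d a c hc, zero_mul]
    · rw [hT c b (by omega), mul_zero]

variable [NoZeroDivisors R] [Nontrivial R]

theorem pow_apply_ne_zero_of_add_eq (hT : ∀ i j : Fin n, (j : ℕ) + 1 < i → T i j = 0)
    (hsub : ∀ i j : Fin n, (i : ℕ) + 1 = j → T j i ≠ 0) :
    ∀ (d : ℕ) (a b : Fin n), (b : ℕ) + d = a → (T ^ d) a b ≠ 0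
  | 0, a, b, h => by simp [Fin.ext (by omega : (a : ℕ) = b)]
  | d + 1, a, b, h => by
    let b' : Fin n := ⟨b + 1, by omega⟩
    rw [pow_succ, mul_apply, Finset.sum_eq_single_of_mem b' (Finset.mem_univ _)]
    · exact mul_ne_zero (pow_apply_ne_zero_of_add_eq hT hsub d a b' (by simp [b']; omega))
        (hsub b b' rfl)
    · intro c _ hne
      have hcb : (c : ℕ) ≠ b + 1 := fun h => hne (Fin.ext h)
      by_cases hc : (c : ℕ) + d < a
      · rw [pow_apply_eq_zero_of_add_lt hT d a c hc, zero_mul]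
      · rw [hT c b (by omega), mul_zero]

end Hessenberg

end Matrix

theorem short_representation_R_invertible_general {k J : ℕ} (hJ : 0 < J)
    (T : Matrix (Fin (k * J)) (Fin (k * J)) ℂ)
    (htri : ∀ i j : Fin (k * J),
      ((i : ℕ) + 1 < (j : ℕ) ∨ (j : ℕ) + 1 < (i : ℕ)) → T i j = 0)
    (hunred : ∀ i j : Fin (k * J), (i : ℕ) + 1 = (j : ℕ) → T j i ≠ 0) :
    let R : Matrix (Fin (k * J)) (Fin (k * J)) ℂ :=
      Matrix.of fun a c => (T ^ ((c : ℕ) % J)) a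
        ⟨(c : ℕ) / J * J,
          mul_lt_mul_of_pos_right ((Nat.div_lt_iff_lt_mul hJ).mpr c.isLt) hJ⟩
    (∀ i j : Fin (k * J), (j : ℕ) < (i : ℕ) → R i j = 0) ∧
    (∀ i : Fin (k * J), R i i ≠ 0) ∧
    IsUnit R := by
  intro R
  have hT : ∀ i j : Fin (k * J), (j : ℕ) + 1 < i → T i j = 0 := fun i j h => htri i j (.inr h)
  have hcol (c : Fin (k * J)) : (c : ℕ) / J * J + (c : ℕ) % J = c := Nat.div_add_mod' c J
  have hupper : R.IsUpperTriangular := fun a c hca =>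
    pow_apply_eq_zero_of_add_lt hT _ a _ (by simp only [hcol]; exact hca)
  have hdiag (c : Fin (k * J)) : R c c ≠ 0 :=
    pow_apply_ne_zero_of_add_eq hT hunred _ c _ (hcol c)
  exact ⟨fun i j h => hupper h, hdiag, isUnit_of_isUpperTriangular hupper hdiag⟩

/-- for an unreduced Hermitian tridiagonal `T ∈ C^{m×m}`,
`m = kJ`, the matrix `R` with columns `R e_{1+iJ+j} = Tʲ e_{1+iJ}`
(`j = 0,…,J-1`, `i = 0,…,k-1`) is upper triangular with nonzero diagonal
entries, hence invertible. -/
theorem short_representation_R_invertible {k J : ℕ} (hk : 0 < k) (hJ : 0 < J)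
    (T : Matrix (Fin (k * J)) (Fin (k * J)) ℂ)
    (hherm : Tᴴ = T)
    (htri : ∀ i j : Fin (k * J),
      ((i : ℕ) + 1 < (j : ℕ) ∨ (j : ℕ) + 1 < (i : ℕ)) → T i j = 0)
    (hunred : ∀ i j : Fin (k * J), (i : ℕ) + 1 = (j : ℕ) → T j i ≠ 0) :
    let R : Matrix (Fin (k * J)) (Fin (k * J)) ℂ :=
      Matrix.of fun a c => (T ^ ((c : ℕ) % J)) a
        ⟨(c : ℕ) / J * J,
          mul_lt_mul_of_pos_right ((Nat.div_lt_iff_lt_mul hJ).mpr c.isLt) hJ⟩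
    (∀ i j : Fin (k * J), (j : ℕ) < (i : ℕ) → R i j = 0) ∧
    (∀ i : Fin (k * J), R i i ≠ 0) ∧
    IsUnit R :=
  short_representation_R_invertible_general hJ T htri hunred
end
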